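/- With M(q) the tilted matrix of W and M̃(q) the tilted matrix of the HTR generator W̃ (same tilting on the (1,2) and (2,1) entries), one has M̃(q) = P_st M(F̃ − q)ᵀ P_st⁻¹ for all q ∈ ℝ. -/

import Mathlib

/-!
Tilting and time reversal `A ↦ P_st Aᵀ P_st⁻¹` commute up to `q ↦ -q`, and the stalling
generator `Wst` has no `(1,2)`, `(2,1)` entries, so its contribution `P_st (Wst)ᵀ P_st⁻¹` to `W̃`
is unaffected by tilting. What remains is the edge part `W - Wst`, supported on the pair
`{1, 2}`, where `F̃` is exactly the exponent with `e^F̃ pst₁ W₂₁ / pst₂ = W₁₂`.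
-/

open Real

noncomputable section

namespace Matrix

variable {n : Type*} [DecidableEq n]

def tilt (V : Matrix n n ℝ) (a b : n) (q : ℝ) : Matrix n n ℝ :=
  of fun i j =>
    if i = a ∧ j = b then V a b * exp (-q)
    else if i = b ∧ j = a then V b a * exp q
    else V i j

theorem tilt_add (A B : Matrix n n ℝ) (a b : n) (q : ℝ) :
    tilt (A + B) a b q = tilt A a b q + tilt B a b q := by
  ext i j
  simp only [tilt, of_apply, add_apply]
  split_ifs <;> ring

theorem tilt_eq_self {V : Matrix n n ℝ} {a b : n} (hab : V a b = 0) (hba : V b a = 0)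
    (q : ℝ) : tilt V a b q = V := by
  ext i j
  simp only [tilt, of_apply]
  split_ifs with h₁ h₂
  · rw [h₁.1, h₁.2, hab, zero_mul]
  · rw [h₂.1, h₂.2, hba, zero_mul]
  · rfl

variable [Fintype n]

def timeReversal (p : n → ℝ) (A : Matrix n n ℝ) : Matrix n n ℝ :=
  diagonal p * Aᵀ * diagonal fun i => (p i)⁻¹

theorem timeReversal_apply (p : n → ℝ) (A : Matrix n n ℝ) (i j : n) :
    timeReversal p A i j = p i * A j i * (p j)⁻¹ := by
  simp only [timeReversal, mul_diagonal, diagonal_mul, transpose_apply]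

theorem timeReversal_add (p : n → ℝ) (A B : Matrix n n ℝ) :
    timeReversal p (A + B) = timeReversal p A + timeReversal p B := by
  simp only [timeReversal, transpose_add, mul_add, add_mul]

theorem tilt_timeReversal (p : n → ℝ) (A : Matrix n n ℝ) {a b : n} (hne : a ≠ b) (q : ℝ) :
    tilt (timeReversal p A) a b q = timeReversal p (tilt A a b (-q)) := by
  ext i j
  simp only [tilt, of_apply, timeReversal_apply]
  by_cases hab : i = a ∧ j = b
  · obtain ⟨rfl, rfl⟩ := hab
    simp only [and_self, if_true, hne.symm, false_and, if_false]
    ring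
  by_cases hba : i = b ∧ j = a
  · obtain ⟨rfl, rfl⟩ := hba
    simp only [and_self, if_true, hne.symm, false_and, if_false, neg_neg]
    ring
  rw [if_neg hab, if_neg hba, if_neg (fun h => hba h.symm), if_neg (fun h => hab h.symm)]

theorem tilt_eq_timeReversal_tilt_of_edge {E : Matrix n n ℝ} {a b : n} (hne : a ≠ b)
    (hE : ∀ i j, i ≠ j → ¬(i = a ∧ j = b) → ¬(i = b ∧ j = a) → E i j = 0)
    (hab : 0 < E a b) (hba : 0 < E b a) {p : n → ℝ} (hp : ∀ i, 0 < p i) (q : ℝ) :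
    tilt E a b q =
      timeReversal p (tilt E a b (log (E a b * p b / (E b a * p a)) - q)) := by
  have hpa := (hp a).ne'
  have hpb := (hp b).ne'
  have hexp : exp (log (E a b * p b / (E b a * p a))) = E a b * p b / (E b a * p a) :=
    exp_log (by have := hp a; have := hp b; positivity)
  ext i j
  simp only [tilt, of_apply, timeReversal_apply]
  by_cases hij : i = a ∧ j = b
  · obtain ⟨rfl, rfl⟩ := hij
    simp only [and_self, if_true, hne.symm, false_and, if_false]
    rw [exp_sub, hexp, Real.exp_neg]
    field_simp
  by_cases hji : i = b ∧ j = a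
  · obtain ⟨rfl, rfl⟩ := hji
    simp only [and_self, if_true, hne.symm, false_and, if_false, exp_sub, neg_sub, hexp]
    field_simp
  rw [if_neg hij, if_neg hji, if_neg (fun h => hji h.symm), if_neg (fun h => hij h.symm)]
  rcases eq_or_ne i j with rfl | hne'
  · field_simp [(hp i).ne']
  · rw [hE i j hne' hij hji, hE j i hne'.symm (fun h => hji h.symm) (fun h => hij h.symm)]
    ring

end Matrix

end

open Matrix

theorem tilted_HTR_symmetry_general {m : ℕ}
    (W Wst Wtil : Matrix (Fin (m + 3)) (Fin (m + 3)) ℝ)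
    (h12pos : 0 < W 0 1) (h21pos : 0 < W 1 0)
    (h12 : Wst 0 1 = 0) (h21 : Wst 1 0 = 0)
    (hother : ∀ i j : Fin (m + 3),
      ¬((i = 0 ∧ j = 1) ∨ (i = 1 ∧ j = 0) ∨ (i = 0 ∧ j = 0) ∨ (i = 1 ∧ j = 1)) →
      Wst i j = W i j)
    (pst : Fin (m + 3) → ℝ) (hpst : ∀ i, 0 < pst i)
    (hWtil : Wtil = W - Wst + Matrix.diagonal pst * Wst.transpose *
        Matrix.diagonal (fun i => (pst i)⁻¹))
    (M Mt : ℝ → Matrix (Fin (m + 3)) (Fin (m + 3)) ℝ)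
    (hM : ∀ q, M q = Matrix.of fun i j =>
      if i = 0 ∧ j = 1 then W 0 1 * Real.exp (-q)
      else if i = 1 ∧ j = 0 then W 1 0 * Real.exp q
      else W i j)
    (hMt : ∀ q, Mt q = Matrix.of fun i j =>
      if i = 0 ∧ j = 1 then Wtil 0 1 * Real.exp (-q)
      else if i = 1 ∧ j = 0 then Wtil 1 0 * Real.exp q
      else Wtil i j) :
    ∀ q : ℝ, Mt q =
      Matrix.diagonal pst *
        (M (Real.log (W 0 1 * pst 1 / (W 1 0 * pst 0)) - q)).transpose *
        Matrix.diagonal (fun i => (pst i)⁻¹) := by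
  intro q
  have h01 : (0 : Fin (m + 3)) ≠ 1 := by simp
  have hedge : ∀ i j, i ≠ j → ¬(i = 0 ∧ j = 1) → ¬(i = 1 ∧ j = 0) → (W - Wst) i j = 0 := by
    intro i j hij h₁ h₂
    have hout : Wst i j = W i j :=
      hother i j (by rintro (h | h | ⟨rfl, rfl⟩ | ⟨rfl, rfl⟩) <;> tauto)
    rw [Matrix.sub_apply, hout, sub_self]
  have hE01 : (W - Wst) 0 1 = W 0 1 := by rw [Matrix.sub_apply, h12, sub_zero]
  have hE10 : (W - Wst) 1 0 = W 1 0 := by rw [Matrix.sub_apply, h21, sub_zero]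
  have hblock := tilt_eq_timeReversal_tilt_of_edge h01 hedge (hE01 ▸ h12pos) (hE10 ▸ h21pos)
    hpst q
  rw [hE01, hE10] at hblock
  set F := log (W 0 1 * pst 1 / (W 1 0 * pst 0))
  rw [hMt, hM]
  change tilt Wtil 0 1 q = timeReversal pst (tilt W 0 1 (F - q))
  calc tilt Wtil 0 1 q
      = tilt (W - Wst) 0 1 q + timeReversal pst (tilt Wst 0 1 (-q)) := by
        rw [hWtil, tilt_add, ← timeReversal, tilt_timeReversal _ _ h01]
    _ = timeReversal pst (tilt (W - Wst) 0 1 (F - q)) +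
          timeReversal pst (tilt Wst 0 1 (F - q)) := by
        rw [hblock, tilt_eq_self h12 h21, tilt_eq_self h12 h21]
    _ = timeReversal pst (tilt W 0 1 (F - q)) := by
        rw [← timeReversal_add, ← tilt_add, sub_add_cancel]

/-- with `M(q)` the tilted matrix of `W` and `M̃(q)` the tilted
matrix of the HTR generator `W̃` (same tilting of the `(1,2)` and `(2,1)`
entries), one has `M̃(q) = Pst M(F̃ − q)ᵀ Pst⁻¹` for all `q`, where
`F̃ = log(W₁₂ pst₂/(W₂₁ pst₁))`. States `1,2` are indices `0,1`. -/
theorem tilted_HTR_symmetry {m : ℕ}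
    (W Wst Wtil : Matrix (Fin (m + 3)) (Fin (m + 3)) ℝ)
    (hoff : ∀ i j : Fin (m + 3), i ≠ j → 0 ≤ W i j)
    (hcol : ∀ j : Fin (m + 3), ∑ i : Fin (m + 3), W i j = 0)
    (h12pos : 0 < W 0 1) (h21pos : 0 < W 1 0)
    (h12 : Wst 0 1 = 0) (h21 : Wst 1 0 = 0)
    (h11 : Wst 0 0 = W 0 0 + W 1 0) (h22 : Wst 1 1 = W 1 1 + W 0 1)
    (hother : ∀ i j : Fin (m + 3),
      ¬((i = 0 ∧ j = 1) ∨ (i = 1 ∧ j = 0) ∨ (i = 0 ∧ j = 0) ∨ (i = 1 ∧ j = 1)) →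
      Wst i j = W i j)
    (pst : Fin (m + 3) → ℝ) (hpst : ∀ i, 0 < pst i)
    (hsteady : Wst.mulVec pst = 0)
    (hWtil : Wtil = W - Wst + Matrix.diagonal pst * Wst.transpose *
        Matrix.diagonal (fun i => (pst i)⁻¹))
    (M Mt : ℝ → Matrix (Fin (m + 3)) (Fin (m + 3)) ℝ)
    (hM : ∀ q, M q = Matrix.of fun i j =>
      if i = 0 ∧ j = 1 then W 0 1 * Real.exp (-q)
      else if i = 1 ∧ j = 0 then W 1 0 * Real.exp q
      else W i j)
    (hMt : ∀ q, Mt q = Matrix.of fun i j =>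
      if i = 0 ∧ j = 1 then Wtil 0 1 * Real.exp (-q)
      else if i = 1 ∧ j = 0 then Wtil 1 0 * Real.exp q
      else Wtil i j) :
    ∀ q : ℝ, Mt q =
      Matrix.diagonal pst *
        (M (Real.log (W 0 1 * pst 1 / (W 1 0 * pst 0)) - q)).transpose *
        Matrix.diagonal (fun i => (pst i)⁻¹) :=
  tilted_HTR_symmetry_general W Wst Wtil h12pos h21pos h12 h21 hother pst hpst hWtil M Mt hM hMt
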